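/- arXiv:math/0608432 — 2 statements merged into one kernel-verified Lean document; each statement's English description precedes it below -/
import Mathlib

section
/- Fix a continuous potential A : X → ℝ and a constraint φ ∈ C⁰(X,ℝ^n), and take h ∈ φ_*(M_T). Let {φ_j} be a sequence of constraints converging uniformly to φ, and let {h_j} ⊂ ℝ^n be a sequence satisfying h_j ∈ (φ_j)_*(m_{A,φ}(h)) for each j. Then lim_{j→∞} β_{A,φ_j}(h_j) = β_{A,φ}(h). -/
/-!
Every measure of `m_{A,φ}(h)` is admissible for `(φ_j, h_j)`, so `β_{A,φ_j}(h_j) ≥ β_{A,φ}(h)`.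
Conversely, `M_T` is weak* compact and `μ ↦ (φ_*(μ), ∫ A dμ)` is continuous, so invariant measures
whose `φ`-rotation vector is close to `h` have `∫ A dμ < β_{A,φ}(h) + ε`. Since
`|φ_*(μ) - (φ_j)_*(μ)| ≤ ‖φ - φ_j‖_∞` and hence `h_j → h`, for large `j` every measure admissible
for `(φ_j, h_j)` is of this kind.
-/

open MeasureTheory Filter Topology Metric Set

variable {X : Type*} [MetricSpace X] [CompactSpace X] [MeasurableSpace X] [BorelSpace X]

/-- The set of `T`-invariant Borel probability measures on `X`. -/
def MT (T : X → X) : Set (ProbabilityMeasure X) :=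
  {μ | (μ : Measure X).map T = (μ : Measure X)}

/-- The rotation vector `φ_*(μ)` of a measure `μ` with respect to a constraint `φ`. -/
noncomputable def rotv {n : ℕ} (φ : X → EuclideanSpace ℝ (Fin n))
    (μ : ProbabilityMeasure X) : EuclideanSpace ℝ (Fin n) :=
  ∫ x, φ x ∂(μ : Measure X)

/-- The integral of the potential `A` against a measure. -/
noncomputable def intA (A : X → ℝ) (μ : ProbabilityMeasure X) : ℝ :=
  ∫ x, A x ∂(μ : Measure X)

/-- The beta function `β_{A,φ}(h) = sup {∫ A dμ : μ ∈ M_T, φ_*(μ) = h}`. -/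
noncomputable def betaFn {n : ℕ} (T : X → X) (A : X → ℝ)
    (φ : X → EuclideanSpace ℝ (Fin n)) (h : EuclideanSpace ℝ (Fin n)) : ℝ :=
  sSup (intA A '' {μ ∈ MT T | rotv φ μ = h})

/-- The alpha function `α_{A,φ}(c) = min_{h ∈ φ_*(M_T)} (⟨c,h⟩ - β_{A,φ}(h))`. -/
noncomputable def alphaFn {n : ℕ} (T : X → X) (A : X → ℝ)
    (φ : X → EuclideanSpace ℝ (Fin n)) (c : EuclideanSpace ℝ (Fin n)) : ℝ :=
  sInf ((fun h => (inner ℝ c h : ℝ) - betaFn T A φ h) '' (rotv φ '' MT T))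

/-- The set `m_{A,φ}(h)` of `(A,h)`-maximizing measures. -/
noncomputable def mset {n : ℕ} (T : X → X) (A : X → ℝ)
    (φ : X → EuclideanSpace ℝ (Fin n)) (h : EuclideanSpace ℝ (Fin n)) :
    Set (ProbabilityMeasure X) :=
  {μ ∈ MT T | rotv φ μ = h ∧ intA A μ = betaFn T A φ h}

section IntegralContinuity

variable {Ω E : Type*} [TopologicalSpace Ω] [CompactSpace Ω] [MeasurableSpace Ω]
  [OpensMeasurableSpace Ω] [NormedAddCommGroup E]

lemma ContinuousMap.integrable_of_compactSpace (f : C(Ω, E)) (μ : Measure Ω)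
    [IsFiniteMeasure μ] : Integrable f μ :=
  f.continuous.integrable_of_hasCompactSupport (HasCompactSupport.of_compactSpace f)

variable [NormedSpace ℝ E]

lemma ProbabilityMeasure.continuous_integral_continuousMap_of_finiteDimensional
    [FiniteDimensional ℝ E] (f : C(Ω, E)) :
    Continuous fun μ : ProbabilityMeasure Ω => ∫ x, f x ∂μ := by
  let e := (Module.finBasis ℝ E).equivFunL
  rw [← e.comp_continuous_iff]
  refine continuous_pi fun i => ?_
  let L : E →L[ℝ] ℝ := (ContinuousLinearMap.proj i).comp e.toContinuousLinearMap
  have hL : ∀ μ : ProbabilityMeasure Ω, e (∫ x, f x ∂μ) i = ∫ x, L (f x) ∂μ := fun μ =>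
    (L.integral_comp_comm (f.integrable_of_compactSpace μ)).symm
  simp only [Function.comp_apply, hL]
  exact ProbabilityMeasure.continuous_integral_continuousMap
    ((⟨L, L.continuous⟩ : C(E, ℝ)).comp f)

lemma ProbabilityMeasure.dist_integral_le_dist (f g : C(Ω, E)) (μ : ProbabilityMeasure Ω) :
    dist (∫ x, f x ∂μ) (∫ x, g x ∂μ) ≤ dist f g := by
  rw [dist_eq_norm, ← integral_sub (f.integrable_of_compactSpace μ)
    (g.integrable_of_compactSpace μ)]
  simpa using norm_integral_le_of_norm_le_const (μ := (μ : Measure Ω))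
    (Eventually.of_forall fun x => (dist_eq_norm (f x) (g x)) ▸ f.dist_apply_le_dist (g := g) x)

end IntegralContinuity

lemma IsCompact.exists_pos_forall_lt_of_dist_lt {α Y : Type*} [TopologicalSpace α]
    [MetricSpace Y] {S : Set α} (hS : IsCompact S) {f : α → ℝ} {g : α → Y}
    (hf : Continuous f) (hg : Continuous g) {y : Y} {c : ℝ}
    (hfg : ∀ x ∈ S, g x = y → f x < c) :
    ∃ δ > 0, ∀ x ∈ S, dist (g x) y < δ → f x < c := by
  have hK : IsCompact (S ∩ {x | c ≤ f x}) := hS.inter_right (isClosed_le continuous_const hf)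
  have hpos : ∀ x ∈ S ∩ {x | c ≤ f x}, 0 < dist (g x) y := fun x hx =>
    dist_pos.2 fun hxy => hx.2.not_gt (hfg x hx.1 hxy)
  obtain ⟨δ, hδ, hδK⟩ := hK.exists_forall_le' (hg.dist continuous_const).continuousOn hpos
  exact ⟨δ, hδ, fun x hx hxδ => not_le.1 fun hcx => (hδK x ⟨hx, hcx⟩).not_gt hxδ⟩

section BetaFunction

variable {Ω : Type*} [MeasurableSpace Ω] {n : ℕ} {T : Ω → Ω} {A : Ω → ℝ}

lemma isClosed_MT [TopologicalSpace Ω] [HasOuterApproxClosed Ω] [BorelSpace Ω]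
    (hT : Continuous T) : IsClosed (MT T) := by
  have hMT : MT T = {μ : ProbabilityMeasure Ω | μ.map hT.measurable.aemeasurable = μ} := by
    ext μ
    rw [mem_ofPred_eq, ← ProbabilityMeasure.toMeasure_injective.eq_iff,
      ProbabilityMeasure.toMeasure_map]
    rfl
  rw [hMT]
  exact isClosed_eq (ProbabilityMeasure.continuous_map hT) continuous_id

lemma continuous_intA [TopologicalSpace Ω] [CompactSpace Ω] [OpensMeasurableSpace Ω]
    (hA : Continuous A) : Continuous (intA A) :=
  ProbabilityMeasure.continuous_integral_continuousMap (⟨A, hA⟩ : C(Ω, ℝ))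

lemma continuous_rotv [TopologicalSpace Ω] [CompactSpace Ω] [OpensMeasurableSpace Ω]
    (φ : C(Ω, EuclideanSpace ℝ (Fin n))) : Continuous (rotv φ) :=
  ProbabilityMeasure.continuous_integral_continuousMap_of_finiteDimensional φ

lemma le_betaFn [TopologicalSpace Ω] [T2Space Ω] [CompactSpace Ω] [BorelSpace Ω]
    (hA : Continuous A) (φ : Ω → EuclideanSpace ℝ (Fin n))
    {μ : ProbabilityMeasure Ω} (hμ : μ ∈ MT T) : intA A μ ≤ betaFn T A φ (rotv φ μ) :=
  le_csSup ((isCompact_range (continuous_intA hA)).bddAbove.mono (image_subset_range _ _))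
    ⟨μ, ⟨hμ, rfl⟩, rfl⟩

lemma betaFn_le {φ : Ω → EuclideanSpace ℝ (Fin n)} {h : EuclideanSpace ℝ (Fin n)} {c : ℝ}
    (hne : ∃ μ ∈ MT T, rotv φ μ = h) (hc : ∀ μ ∈ MT T, rotv φ μ = h → intA A μ ≤ c) :
    betaFn T A φ h ≤ c := by
  obtain ⟨μ, hμ, hμh⟩ := hne
  refine csSup_le ⟨_, ⟨μ, ⟨hμ, hμh⟩, rfl⟩⟩ ?_
  rintro _ ⟨ν, ⟨hν, hνh⟩, rfl⟩
  exact hc ν hν hνh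

/-- Upper semicontinuity of `β` jointly in the constraint and the rotation vector, stated for the
integrals rather than for `betaFn`, whose value `sSup ∅ = 0` off the rotation set is junk. -/
lemma eventually_forall_intA_lt [TopologicalSpace Ω] [T2Space Ω] [HasOuterApproxClosed Ω]
    [CompactSpace Ω] [BorelSpace Ω] (hT : Continuous T) (hA : Continuous A)
    {φ : C(Ω, EuclideanSpace ℝ (Fin n))} {h : EuclideanSpace ℝ (Fin n)} {c : ℝ}
    (hc : betaFn T A φ h < c) :
    ∀ᶠ p : C(Ω, EuclideanSpace ℝ (Fin n)) × EuclideanSpace ℝ (Fin n) in 𝓝 (φ, h),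
      ∀ μ ∈ MT T, rotv p.1 μ = p.2 → intA A μ < c := by
  obtain ⟨δ, hδ, hnear⟩ := (isClosed_MT hT).isCompact.exists_pos_forall_lt_of_dist_lt
    (continuous_intA hA) (continuous_rotv φ)
    fun μ hμ hμh => (hμh ▸ le_betaFn hA φ hμ).trans_lt hc
  filter_upwards [prod_mem_nhds (ball_mem_nhds φ (half_pos hδ)) (ball_mem_nhds h (half_pos hδ))]
  rintro ⟨ψ, h'⟩ ⟨hψ, hh'⟩ μ hμ hμh'
  refine hnear μ hμ ?_
  rw [mem_ball] at hψ hh'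
  calc dist (rotv φ μ) h ≤ dist (rotv φ μ) (rotv ψ μ) + dist h' h := hμh' ▸ dist_triangle _ _ _
    _ ≤ dist φ ψ + dist h' h := by
        gcongr; exact ProbabilityMeasure.dist_integral_le_dist φ ψ μ
    _ < δ := by rw [dist_comm]; linarith

end BetaFunction

theorem stmt9_general {n : ℕ} (T : X → X) (hT : Continuous T) (A : X → ℝ) (hA : Continuous A)
    (φ : C(X, EuclideanSpace ℝ (Fin n))) (φseq : ℕ → C(X, EuclideanSpace ℝ (Fin n)))
    (hconv : Tendsto φseq atTop (𝓝 φ))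
    (h : EuclideanSpace ℝ (Fin n))
    (hseq : ℕ → EuclideanSpace ℝ (Fin n))
    (hhj : ∀ j, hseq j ∈ rotv (⇑(φseq j)) '' mset T A (⇑φ) h) :
    Tendsto (fun j => betaFn T A (⇑(φseq j)) (hseq j)) atTop (𝓝 (betaFn T A (⇑φ) h)) := by
  choose μ hμ hμj using hhj
  have hlower : ∀ j, betaFn T A φ h ≤ betaFn T A (φseq j) (hseq j) := fun j =>
    (hμ j).2.2 ▸ hμj j ▸ le_betaFn hA _ (hμ j).1
  have hseq_lim : Tendsto hseq atTop (𝓝 h) := by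
    refine tendsto_iff_dist_tendsto_zero.2 (squeeze_zero (fun _ => dist_nonneg) (fun j => ?_)
      (tendsto_iff_dist_tendsto_zero.1 hconv))
    rw [← hμj j, ← (hμ j).2.1]
    exact ProbabilityMeasure.dist_integral_le_dist (φseq j) φ (μ j)
  refine tendsto_order.2 ⟨fun a ha => Eventually.of_forall fun j => ha.trans_le (hlower j),
    fun c hc => ?_⟩
  obtain ⟨c', hβc', hc'c⟩ := exists_between hc
  filter_upwards [(hconv.prodMk_nhds hseq_lim).eventually (eventually_forall_intA_lt hT hA hβc')]
    with j hj
  exact (betaFn_le ⟨μ j, (hμ j).1, hμj j⟩ fun ν hν hνj => (hj ν hν hνj).le).trans_lt hc'c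

/-- if `φ_j → φ` uniformly, `h ∈ φ_*(M_T)` and `h_j ∈ (φ_j)_*(m_{A,φ}(h))`
for each `j`, then `β_{A,φ_j}(h_j) → β_{A,φ}(h)`. -/
theorem stmt9 {n : ℕ} (T : X → X) (hT : Continuous T) (A : X → ℝ) (hA : Continuous A)
    (φ : C(X, EuclideanSpace ℝ (Fin n))) (φseq : ℕ → C(X, EuclideanSpace ℝ (Fin n)))
    (hconv : Tendsto φseq atTop (𝓝 φ))
    (h : EuclideanSpace ℝ (Fin n)) (hh : h ∈ rotv (⇑φ) '' MT T)
    (hseq : ℕ → EuclideanSpace ℝ (Fin n))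
    (hhj : ∀ j, hseq j ∈ rotv (⇑(φseq j)) '' mset T A (⇑φ) h) :
    Tendsto (fun j => betaFn T A (⇑(φseq j)) (hseq j)) atTop (𝓝 (betaFn T A (⇑φ) h)) :=
  stmt9_general T hT A hA φ φseq hconv h hseq hhj
end

section
/- Let σ : Σ → Σ be a subshift of finite type, φ : Σ → ℚ^n a locally constant constraint, and A : Σ → ℝ a Walters potential. Let r ∈ φ_*(M_σ) ∩ ℚ^n, and suppose ν is an ergodic σ-invariant probability measure with φ_*(ν) = r with respect to which φ is joint recurrent. Then for each ε > 0 there exists a periodic probability measure μ with φ_*(μ) = r such that |∫A dν − ∫A dμ| < ε. -/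
/-!
By Birkhoff's ergodic theorem, `ν`-almost every point of `S` has `S_k A` within `k ε / 2` of
`k ∫ A dν` for all large `k`, so some cylinder `D` of positive measure consists of points doing
so from a fixed time `K` on. Joint recurrence gives `ν (Ξ^[K+1] D) = ν D > 0`; a point `z` there
returns to `D` `K + 1` times, each time with `S_L φ z` arbitrarily close to `L r`. As `φ` and `r`
take values in a lattice `q⁻¹ ℤⁿ`, close means equal, so the concatenated return time `Λ > K` has
`S_Λ φ z = Λ r` exactly. Repeating the first `Λ` symbols of `z` gives a periodic point of `S` (the
cylinder makes the transition at the seam allowed) whose orbit measure has rotation vector `r`,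
and the Walters property bounds the difference of the Birkhoff sums of `A` along the two orbits.
-/

open MeasureTheory Filter Topology Set

/-- The left shift on the full shift space `{1,…,N}^ℕ`. -/
def Shift {N : ℕ} : (ℕ → Fin N) → (ℕ → Fin N) := fun x i => x (i + 1)

/-- `S` is a subshift of finite type: it is the set of sequences all of whose transitions
are allowed by some transition relation `M`. -/
def IsSubshiftFT {N : ℕ} (S : Set (ℕ → Fin N)) : Prop :=
  ∃ M : Fin N → Fin N → Prop, S = {x | ∀ i, M (x i) (x (i + 1))}

/-- The Birkhoff sum `S_k f` for the shift. -/
def birkhoff {N : ℕ} {E : Type*} [AddCommMonoid E] (k : ℕ) (f : (ℕ → Fin N) → E)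
    (x : ℕ → Fin N) : E :=
  ∑ j ∈ Finset.range k, f (Shift^[j] x)

open Classical in
/-- The metric `d(x,y) = λ^{min{j : x_j ≠ y_j}}` on the shift space. -/
noncomputable def sdist {N : ℕ} (lam : ℝ) (x y : ℕ → Fin N) : ℝ :=
  if x = y then 0 else lam ^ sInf {j | x j ≠ y j}

/-- `f` is a Walters function on `S` (for the metric with parameter `λ`): there is
`H : ℝ₊ → ℝ₊ ∪ {+∞}` increasing, null and continuous at zero, such that `d_k(x,y) ≤ s`
implies `|S_k f(x) - S_k f(y)| ≤ H(s)`. -/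
def IsWalters {N : ℕ} (S : Set (ℕ → Fin N)) (lam : ℝ) (f : (ℕ → Fin N) → ℝ) : Prop :=
  ∃ H : ℝ → ENNReal, Monotone H ∧ H 0 = 0 ∧ Tendsto H (nhdsWithin 0 (Ioi 0)) (nhds 0) ∧
    ∀ s : ℝ, 0 ≤ s → ∀ k : ℕ, 0 < k → ∀ x ∈ S, ∀ y ∈ S,
      (∀ j < k, sdist lam (Shift^[j] x) (Shift^[j] y) ≤ s) →
      ENNReal.ofReal |birkhoff k f x - birkhoff k f y| ≤ H s

/-- A function on the shift space is locally constant if it depends on finitely many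
coordinates. -/
def LocallyConstantFn {N : ℕ} {E : Type*} (f : (ℕ → Fin N) → E) : Prop :=
  ∃ j : ℕ, ∀ x y : ℕ → Fin N, (∀ i ≤ j, x i = y i) → f x = f y

/-- The set `M_σ` of shift-invariant Borel probability measures giving full mass to the
subshift `S`. -/
def MS {N : ℕ} (S : Set (ℕ → Fin N)) : Set (ProbabilityMeasure (ℕ → Fin N)) :=
  {μ | (μ : Measure (ℕ → Fin N)).map Shift = (μ : Measure (ℕ → Fin N)) ∧
    (μ : Measure (ℕ → Fin N)) S = 1}

/-- `μ` is a periodic probability measure of the subshift `S`: the uniform probability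
measure on the orbit of a periodic point of `S`. -/
def IsPeriodicMeasure {N : ℕ} (S : Set (ℕ → Fin N)) (μ : ProbabilityMeasure (ℕ → Fin N)) :
    Prop :=
  ∃ z ∈ S, ∃ M : ℕ, 0 < M ∧ Shift^[M] z = z ∧
    (μ : Measure (ℕ → Fin N)) =
      (M : ENNReal)⁻¹ • ∑ j ∈ Finset.range M, Measure.dirac (Shift^[j] z)

/-- `f` is joint recurrent with respect to the measure `ν`: for every measurable `D`,
`ν(Ξ(D)) = ν(D)`, where `Ξ(D)` is the set of `z ∈ D` such that for every `ε > 0` there is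
`L > 0` with `σ^L(z) ∈ D` and `‖S_L f(z) - L f_*(ν)‖ < ε`. -/
def JointRec {N n : ℕ} (f : (ℕ → Fin N) → EuclideanSpace ℝ (Fin n))
    (ν : Measure (ℕ → Fin N)) : Prop :=
  ∀ D : Set (ℕ → Fin N), MeasurableSet D →
    ν {z ∈ D | ∀ ε > 0, ∃ L : ℕ, 0 < L ∧ Shift^[L] z ∈ D ∧
      ‖birkhoff L f z - (L : ℝ) • ∫ x, f x ∂ν‖ < ε} = ν D

section PointwiseErgodic

variable {α : Type*} {T : α → α} {g : α → ℝ}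
noncomputable def birkhoffMax (T : α → α) (g : α → ℝ) (n : ℕ) (x : α) : ℝ :=
  (Finset.range (n + 1)).sup' Finset.nonempty_range_add_one fun k => birkhoffSum T g k x

lemma birkhoffSum_le_birkhoffMax {k n : ℕ} (hk : k ≤ n) (x : α) :
    birkhoffSum T g k x ≤ birkhoffMax T g n x :=
  Finset.le_sup' (fun k => birkhoffSum T g k x) (Finset.mem_range_succ_iff.2 hk)

lemma birkhoffMax_nonneg (n : ℕ) (x : α) : 0 ≤ birkhoffMax T g n x := by
  simpa [birkhoffSum_zero] using birkhoffSum_le_birkhoffMax (T := T) (g := g) n.zero_le x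

lemma birkhoffMax_mono {m n : ℕ} (hmn : m ≤ n) (x : α) :
    birkhoffMax T g m x ≤ birkhoffMax T g n x :=
  Finset.sup'_mono _ (Finset.range_subset_range.2 (Nat.succ_le_succ hmn)) _

lemma birkhoffMax_le_add_birkhoffMax_apply {n : ℕ} {x : α} (hx : 0 < birkhoffMax T g n x) :
    birkhoffMax T g n x ≤ g x + birkhoffMax T g n (T x) := by
  obtain ⟨k, hk, hmax⟩ := Finset.exists_mem_eq_sup' Finset.nonempty_range_add_one
    fun k => birkhoffSum T g k x
  rw [birkhoffMax, hmax] at hx ⊢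
  obtain _ | k := k
  · simp [birkhoffSum_zero] at hx
  rw [birkhoffSum_succ']
  gcongr
  exact birkhoffSum_le_birkhoffMax (by have := Finset.mem_range.1 hk; omega) _

lemma bddAbove_range_birkhoffSum_apply_iff (x : α) :
    BddAbove (range fun k => birkhoffSum T g k (T x)) ↔
      BddAbove (range fun k => birkhoffSum T g k x) := by
  simp only [bddAbove_def, forall_mem_range]
  constructor
  · rintro ⟨C, hC⟩
    refine ⟨max 0 (g x + C), fun k => ?_⟩
    cases k with
    | zero => simp [birkhoffSum_zero]
    | succ k => rw [birkhoffSum_succ']; exact le_max_of_le_right (by linarith [hC k])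
  · rintro ⟨C, hC⟩
    exact ⟨C - g x, fun k => by linarith [hC (k + 1), birkhoffSum_succ' T g k x]⟩

lemma birkhoffSum_sub_const (c : ℝ) (k : ℕ) (x : α) :
    birkhoffSum T (fun y => g y - c) k x = birkhoffSum T g k x - k * c := by
  simp [birkhoffSum, Finset.sum_sub_distrib]

variable [MeasurableSpace α] {μ : Measure α}

lemma measurable_birkhoffSum (hT : Measurable T) (hg : Measurable g) (k : ℕ) :
    Measurable (birkhoffSum T g k) :=
  Finset.measurable_sum _ fun j _ => hg.comp (hT.iterate j)

lemma measurable_birkhoffMax (hT : Measurable T) (hg : Measurable g) (n : ℕ) :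
    Measurable (birkhoffMax T g n) :=
  Finset.measurable_range_sup'' fun k _ => measurable_birkhoffSum hT hg k

lemma integrable_birkhoffSum (hT : MeasurePreserving T μ μ) (hg : Integrable g μ) (k : ℕ) :
    Integrable (birkhoffSum T g k) μ :=
  integrable_finsetSum _ fun j _ => (hT.iterate j).integrable_comp_of_integrable hg

lemma integrable_birkhoffMax (hT : MeasurePreserving T μ μ) (hgm : Measurable g)
    (hg : Integrable g μ) (n : ℕ) : Integrable (birkhoffMax T g n) μ := by
  refine (integrable_finsetSum (Finset.range (n + 1))
    fun k _ => (integrable_birkhoffSum hT hg k).abs).mono'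
    (measurable_birkhoffMax hT.measurable hgm n).aestronglyMeasurable (ae_of_all _ fun x => ?_)
  obtain ⟨k, hk, hmax⟩ := Finset.exists_mem_eq_sup' Finset.nonempty_range_add_one
    fun k => birkhoffSum T g k x
  rw [Real.norm_eq_abs, birkhoffMax, hmax]
  exact Finset.single_le_sum (f := fun k => |birkhoffSum T g k x|) (fun _ _ => abs_nonneg _) hk

/-- The maximal ergodic theorem. -/
theorem setIntegral_birkhoffMax_pos_nonneg (hT : MeasurePreserving T μ μ) (hgm : Measurable g)
    (hg : Integrable g μ) (n : ℕ) :
    0 ≤ ∫ x in {x | 0 < birkhoffMax T g n x}, g x ∂μ := by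
  set M := birkhoffMax T g n
  have hMm : Measurable M := measurable_birkhoffMax hT.measurable hgm n
  have hMi : Integrable M μ := integrable_birkhoffMax hT hgm hg n
  have hMTi : Integrable (fun x => M (T x)) μ := hT.integrable_comp_of_integrable hMi
  have hE : MeasurableSet {x | 0 < M x} := measurableSet_lt measurable_const hMm
  calc 0 = ∫ x, (M x - M (T x)) ∂μ := by
        rw [integral_sub hMi hMTi, ← integral_map hT.measurable.aemeasurable
          hMm.aestronglyMeasurable, hT.map_eq, sub_self]
    _ = ∫ x in {x | 0 < M x}, (M x - M (T x)) ∂μ + ∫ x in {x | 0 < M x}ᶜ, (M x - M (T x)) ∂μ :=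
        (integral_add_compl hE (hMi.sub hMTi)).symm
    _ ≤ ∫ x in {x | 0 < M x}, (M x - M (T x)) ∂μ + 0 := by
        gcongr
        refine setIntegral_nonpos hE.compl fun x hx => ?_
        have hMx : M x = 0 := le_antisymm (not_lt.1 hx) (birkhoffMax_nonneg n x)
        simpa [hMx] using birkhoffMax_nonneg n (T x)
    _ ≤ ∫ x in {x | 0 < M x}, g x ∂μ := by
        rw [add_zero]
        refine setIntegral_mono_on (hMi.sub hMTi).integrableOn hg.integrableOn hE fun x hx => ?_
        linarith [birkhoffMax_le_add_birkhoffMax_apply hx]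

/-- The set where the sums stay bounded above is `T`-invariant. Were it null, the sets
`{0 < birkhoffMax T g n}` would exhaust `α` up to a null set, and the maximal ergodic theorem
would give `0 ≤ ∫ g`. -/
theorem ae_bddAbove_range_birkhoffSum (hT : Ergodic T μ) (hgm : Measurable g)
    (hg : Integrable g μ) (hneg : ∫ x, g x ∂μ < 0) :
    ∀ᵐ x ∂μ, BddAbove (range fun k => birkhoffSum T g k x) := by
  set B := {x | BddAbove (range fun k => birkhoffSum T g k x)}
  have hBm : MeasurableSet B :=
    measurableSet_bddAbove_range fun k => measurable_birkhoffSum hT.measurable hgm k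
  have hBinv : T ⁻¹' B = B := Set.ext bddAbove_range_birkhoffSum_apply_iff
  refine (hT.measure_self_or_compl_eq_zero hBm hBinv).resolve_left fun hB => hneg.not_ge ?_
  set E : ℕ → Set α := fun n => {x | 0 < birkhoffMax T g n x}
  have hEm : ∀ n, MeasurableSet (E n) := fun n =>
    measurableSet_lt measurable_const (measurable_birkhoffMax hT.measurable hgm n)
  have hEmono : Monotone E := fun m n hmn x (hx : 0 < _) =>
    hx.trans_le (birkhoffMax_mono hmn x)
  have hBE : Bᶜ ⊆ ⋃ n, E n := fun x hx => by
    obtain ⟨_, ⟨k, rfl⟩, hk⟩ := not_bddAbove_iff.1 hx 0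
    exact mem_iUnion.2 ⟨k, hk.trans_le (birkhoffSum_le_birkhoffMax le_rfl x)⟩
  have hEuniv : (⋃ n, E n) =ᵐ[μ] univ :=
    ae_eq_univ.2 (measure_mono_null (compl_subset_comm.1 hBE) hB)
  have hlim := tendsto_setIntegral_of_monotone hEm hEmono hg.integrableOn
  rw [setIntegral_congr_set hEuniv, setIntegral_univ] at hlim
  exact ge_of_tendsto' hlim fun n =>
    setIntegral_birkhoffMax_pos_nonneg hT.toMeasurePreserving hgm hg n

variable [IsProbabilityMeasure μ]

theorem ae_eventually_birkhoffSum_le (hT : Ergodic T μ) (hgm : Measurable g)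
    (hg : Integrable g μ) {δ : ℝ} (hδ : 0 < δ) :
    ∀ᵐ x ∂μ, ∀ᶠ k in atTop, birkhoffSum T g k x ≤ k * (∫ y, g y ∂μ + δ) := by
  set b := ∫ y, g y ∂μ + δ / 2
  have hneg : ∫ y, (g y - b) ∂μ < 0 := by
    rw [integral_sub hg (integrable_const b)]
    simp [b, hδ]
  filter_upwards [ae_bddAbove_range_birkhoffSum (g := fun y => g y - b) hT
    (hgm.sub measurable_const) (hg.sub (integrable_const b)) hneg] with x ⟨C, hC⟩
  filter_upwards [(tendsto_natCast_atTop_atTop.atTop_mul_const (half_pos hδ)).eventually_ge_atTop C]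
    with k hk
  have hSk : birkhoffSum T (fun y => g y - b) k x ≤ C := hC ⟨k, rfl⟩
  rw [birkhoffSum_sub_const] at hSk
  simp only [b] at hSk
  linarith

theorem ae_eventually_abs_birkhoffSum_sub_le (hT : Ergodic T μ) (hgm : Measurable g)
    (hg : Integrable g μ) {δ : ℝ} (hδ : 0 < δ) :
    ∀ᵐ x ∂μ, ∀ᶠ k in atTop, |birkhoffSum T g k x - k * ∫ y, g y ∂μ| ≤ k * δ := by
  filter_upwards [ae_eventually_birkhoffSum_le hT hgm hg hδ,
    ae_eventually_birkhoffSum_le hT hgm.neg hg.neg hδ] with x hup hlow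
  filter_upwards [hup, hlow] with k hk hk'
  simp only [birkhoffSum_neg, Pi.neg_apply, integral_neg] at hk'
  rw [abs_le]
  constructor <;> linarith

end PointwiseErgodic

section Shift

variable {N : ℕ}

lemma shift_iterate_apply (x : ℕ → Fin N) (k i : ℕ) : (Shift^[k] x) i = x (i + k) := by
  induction k generalizing x with
  | zero => rfl
  | succ k ih => rw [Function.iterate_succ_apply, ih]; exact congrArg x (by omega)

lemma measurable_shift : Measurable (Shift : (ℕ → Fin N) → (ℕ → Fin N)) :=
  measurable_pi_lambda _ fun i => measurable_pi_apply (i + 1)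

lemma measurable_birkhoff {E : Type*} [NormedAddCommGroup E] [MeasurableSpace E] [BorelSpace E]
    [SecondCountableTopology E] {f : (ℕ → Fin N) → E} (hf : Measurable f) (k : ℕ) :
    Measurable (birkhoff k f) :=
  Finset.measurable_sum _ fun j _ => hf.comp (measurable_shift.iterate j)

lemma birkhoff_add {E : Type*} [AddCommMonoid E] (f : (ℕ → Fin N) → E) (a b : ℕ)
    (x : ℕ → Fin N) : birkhoff (a + b) f x = birkhoff a f x + birkhoff b f (Shift^[a] x) :=
  birkhoffSum_add Shift f a b x

lemma IsSubshiftFT.measurableSet {S : Set (ℕ → Fin N)} (hS : IsSubshiftFT S) :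
    MeasurableSet S := by
  obtain ⟨M, rfl⟩ := hS
  rw [ofPred_forall]
  measurability

lemma IsSubshiftFT.iterate_mem {S : Set (ℕ → Fin N)} (hS : IsSubshiftFT S) {x : ℕ → Fin N}
    (hx : x ∈ S) (k : ℕ) : Shift^[k] x ∈ S := by
  obtain ⟨M, rfl⟩ := hS
  intro i
  simpa only [shift_iterate_apply, Nat.add_right_comm] using hx (i + k)

lemma sdist_le_pow {lam : ℝ} (hlam0 : 0 ≤ lam) (hlam1 : lam ≤ 1) {x y : ℕ → Fin N} {m : ℕ}
    (h : ∀ i < m, x i = y i) : sdist lam x y ≤ lam ^ m := by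
  unfold sdist
  split_ifs with hxy
  · positivity
  · obtain ⟨j, hj⟩ := Function.ne_iff.1 hxy
    exact pow_le_pow_of_le_one hlam0 hlam1
      (le_csInf ⟨j, hj⟩ fun i hi => not_lt.1 fun him => hi (h i him))

lemma IsWalters.exists_abs_birkhoff_sub_lt {S : Set (ℕ → Fin N)} {lam : ℝ}
    {A : (ℕ → Fin N) → ℝ} (hA : IsWalters S lam A) (hlam0 : 0 < lam) (hlam1 : lam < 1)
    {δ : ℝ} (hδ : 0 < δ) :
    ∃ m, ∀ k, ∀ x ∈ S, ∀ y ∈ S, (∀ i < k + m, x i = y i) →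
      |birkhoff k A x - birkhoff k A y| < δ := by
  obtain ⟨H, -, -, hH, hHA⟩ := hA
  have hpow : Tendsto (fun m : ℕ => lam ^ m) atTop (𝓝[>] 0) :=
    tendsto_nhdsWithin_of_tendsto_nhds_of_eventually_within _
      (tendsto_pow_atTop_nhds_zero_of_lt_one hlam0.le hlam1)
      (Eventually.of_forall fun m => pow_pos hlam0 m)
  obtain ⟨m, hm⟩ := ((hH.comp hpow).eventually
    (eventually_lt_nhds (ENNReal.ofReal_pos.2 hδ))).exists
  refine ⟨m, fun k x hx y hy hxy => ?_⟩
  obtain rfl | hk := k.eq_zero_or_pos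
  · simpa [birkhoff] using hδ
  refine (ENNReal.ofReal_lt_ofReal_iff hδ).1 ((hHA _ (pow_pos hlam0 m).le k hk x hx y hy
    fun j hj => sdist_le_pow hlam0.le hlam1.le fun i hi => ?_).trans_lt hm)
  simpa only [shift_iterate_apply] using hxy (i + j) (by omega)

lemma exists_bound_of_abs_sub_lt_one_on_cylinders {β : Type*} [Finite β] {S : Set (ℕ → β)}
    {f : (ℕ → β) → ℝ} {m : ℕ} (hf : ∀ x ∈ S, ∀ y ∈ S, (∀ i < m, x i = y i) → |f x - f y| < 1) :
    ∃ C, ∀ x ∈ S, |f x| ≤ C := by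
  rcases S.eq_empty_or_nonempty with rfl | ⟨x₀, -⟩
  · simp
  have : Nonempty (ℕ → β) := ⟨x₀⟩
  set π : (ℕ → β) → (Fin m → β) := fun x i => x i
  set rep : (Fin m → β) → (ℕ → β) := Function.invFunOn π S
  obtain ⟨C, hC⟩ := (Set.finite_range fun c => |f (rep c)|).bddAbove
  refine ⟨C + 1, fun x hx => ?_⟩
  have hrep : rep (π x) ∈ S ∧ π (rep (π x)) = π x :=
    ⟨Function.invFunOn_mem ⟨x, hx, rfl⟩, Function.invFunOn_eq ⟨x, hx, rfl⟩⟩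
  have hclose := hf x hx _ hrep.1 fun i hi => (congrFun hrep.2 ⟨i, hi⟩).symm
  have hCx := hC ⟨π x, rfl⟩
  linarith [abs_sub_abs_le_abs_sub (f x) (f (rep (π x)))]

lemma IsWalters.exists_bound {S : Set (ℕ → Fin N)} {lam : ℝ} {A : (ℕ → Fin N) → ℝ}
    (hA : IsWalters S lam A) (hlam0 : 0 < lam) (hlam1 : lam < 1) :
    ∃ C, ∀ x ∈ S, |A x| ≤ C := by
  obtain ⟨m, hm⟩ := hA.exists_abs_birkhoff_sub_lt hlam0 hlam1 one_pos
  exact exists_bound_of_abs_sub_lt_one_on_cylinders (m := 1 + m) fun x hx y hy hxy => by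
    simpa [birkhoff] using hm 1 x hx y hy hxy

lemma IsWalters.integrable {S : Set (ℕ → Fin N)} {lam : ℝ} {A : (ℕ → Fin N) → ℝ}
    (hA : IsWalters S lam A) (hlam0 : 0 < lam) (hlam1 : lam < 1) (hAm : Measurable A)
    {ν : Measure (ℕ → Fin N)} [IsFiniteMeasure ν] (hνS : ∀ᵐ x ∂ν, x ∈ S) : Integrable A ν := by
  obtain ⟨C, hC⟩ := hA.exists_bound hlam0 hlam1
  exact .of_bound hAm.aestronglyMeasurable C
    (hνS.mono fun x hx => (Real.norm_eq_abs _).trans_le (hC x hx))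

end Shift

section DenomLattice

variable {n : ℕ}

/-- The lattice `q⁻¹ ℤⁿ`. -/
def denomLattice (n q : ℕ) : AddSubgroup (EuclideanSpace ℝ (Fin n)) where
  carrier := {v | ∀ i, ∃ k : ℤ, (q : ℝ) * v i = k}
  zero_mem' i := ⟨0, by simp⟩
  add_mem' {v w} hv hw i := by
    obtain ⟨k, hk⟩ := hv i
    obtain ⟨l, hl⟩ := hw i
    exact ⟨k + l, by simp [mul_add, hk, hl]⟩
  neg_mem' {v} hv i := by
    obtain ⟨k, hk⟩ := hv i
    exact ⟨-k, by simp [hk]⟩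

lemma denomLattice_mono {q q' : ℕ} (h : q ∣ q') : denomLattice n q ≤ denomLattice n q' := by
  obtain ⟨d, rfl⟩ := h
  intro v hv i
  obtain ⟨k, hk⟩ := hv i
  exact ⟨d * k, by push_cast; rw [← hk]; ring⟩

lemma exists_mem_denomLattice {v : EuclideanSpace ℝ (Fin n)} (hv : ∀ i, ∃ t : ℚ, v i = t) :
    ∃ q, 0 < q ∧ v ∈ denomLattice n q := by
  choose t ht using hv
  refine ⟨∏ i, (t i).den, Finset.prod_pos fun i _ => (t i).den_pos, fun i => ?_⟩
  obtain ⟨d, hd⟩ := Finset.dvd_prod_of_mem (fun i => (t i).den) (Finset.mem_univ i)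
  refine ⟨d * (t i).num, ?_⟩
  have hnum : ((t i : ℚ) : ℝ) * (t i).den = (t i).num := by exact_mod_cast Rat.mul_den_eq_num (t i)
  rw [hd, ht i]
  push_cast
  linear_combination (d : ℝ) * hnum

lemma exists_subset_denomLattice {s : Set (EuclideanSpace ℝ (Fin n))} (hs : s.Finite)
    (hQ : ∀ v ∈ s, ∀ i, ∃ t : ℚ, v i = t) : ∃ q, 0 < q ∧ s ⊆ denomLattice n q := by
  induction s, hs using Set.Finite.induction_on with
  | empty => exact ⟨1, one_pos, empty_subset _⟩
  | @insert v s _ _ ih =>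
    obtain ⟨q, hq, hs⟩ := ih fun w hw => hQ w (mem_insert_of_mem v hw)
    obtain ⟨q', hq', hv⟩ := exists_mem_denomLattice (hQ v (mem_insert v s))
    refine ⟨q * q', Nat.mul_pos hq hq', insert_subset ?_ ?_⟩
    · exact denomLattice_mono (dvd_mul_left q' q) hv
    · exact hs.trans (denomLattice_mono (dvd_mul_right q q'))

lemma eq_zero_of_mem_denomLattice {q : ℕ} (hq : 0 < q) {v : EuclideanSpace ℝ (Fin n)}
    (hv : v ∈ denomLattice n q) (hnorm : ‖v‖ < (q : ℝ)⁻¹) : v = 0 := by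
  have hq' : (0 : ℝ) < q := Nat.cast_pos.2 hq
  ext i
  obtain ⟨k, hk⟩ := hv i
  have hk1 : |(k : ℝ)| < 1 := by
    rw [← hk, abs_mul, abs_of_pos hq', ← Real.norm_eq_abs]
    calc (q : ℝ) * ‖v i‖ < q * (q : ℝ)⁻¹ :=
          mul_lt_mul_of_pos_left ((PiLp.norm_apply_le v i).trans_lt hnorm) hq'
      _ = 1 := mul_inv_cancel₀ hq'.ne'
  have hk0 : k = 0 := Int.abs_lt_one_iff.1 (by exact_mod_cast hk1)
  simpa [hk0, hq'.ne'] using hk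

end DenomLattice

section Recurrence

variable {N : ℕ} {E : Type*} [NormedAddCommGroup E] [NormedSpace ℝ E]

/-- The set `Ξ(D)` from the definition of joint recurrence, for the rotation vector `v`. -/
def recurrentSet (f : (ℕ → Fin N) → E) (v : E) (D : Set (ℕ → Fin N)) : Set (ℕ → Fin N) :=
  {z ∈ D | ∀ ε > 0, ∃ L : ℕ, 0 < L ∧ Shift^[L] z ∈ D ∧ ‖birkhoff L f z - (L : ℝ) • v‖ < ε}

lemma iterate_recurrentSet_subset (f : (ℕ → Fin N) → E) (v : E) (D : Set (ℕ → Fin N)) (K : ℕ) :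
    (recurrentSet f v)^[K] D ⊆ D :=
  Function.Iterate.rec (· ⊆ D) subset_rfl (fun _ h => (sep_subset _ _).trans h) K

lemma measurableSet_recurrentSet [MeasurableSpace E] [BorelSpace E] [SecondCountableTopology E]
    {f : (ℕ → Fin N) → E} (hf : Measurable f) (v : E) {D : Set (ℕ → Fin N)}
    (hD : MeasurableSet D) : MeasurableSet (recurrentSet f v D) := by
  have hrat : recurrentSet f v D = D ∩ ⋂ p : ℕ, ⋃ L : ℕ, ⋃ (_ : 0 < L),
      Shift^[L] ⁻¹' D ∩ {z | ‖birkhoff L f z - (L : ℝ) • v‖ < 1 / ((p : ℝ) + 1)} := by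
    ext z
    simp only [recurrentSet, mem_inter_iff, mem_iInter, mem_iUnion, mem_preimage,
      mem_ofPred_eq, exists_prop]
    refine and_congr_right fun _ => ⟨fun h p => h _ Nat.one_div_pos_of_nat, fun h ε hε => ?_⟩
    obtain ⟨p, hp⟩ := exists_nat_one_div_lt hε
    obtain ⟨L, hL, hLD, hLv⟩ := h p
    exact ⟨L, hL, hLD, hLv.trans hp⟩
  rw [hrat]
  refine hD.inter (.iInter fun p => .iUnion fun L => .iUnion fun _ =>
    (measurable_shift.iterate L hD).inter (measurableSet_lt ?_ measurable_const))
  exact ((measurable_birkhoff hf L).sub measurable_const).norm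

lemma measurableSet_iterate_recurrentSet [MeasurableSpace E] [BorelSpace E]
    [SecondCountableTopology E] {f : (ℕ → Fin N) → E} (hf : Measurable f) (v : E)
    {D : Set (ℕ → Fin N)} (hD : MeasurableSet D) (K : ℕ) :
    MeasurableSet ((recurrentSet f v)^[K] D) :=
  Function.Iterate.rec _ hD (fun _ => measurableSet_recurrentSet hf v) K

end Recurrence

section Closing

variable {N n : ℕ}

lemma JointRec.measure_iterate_recurrentSet {φ : (ℕ → Fin N) → EuclideanSpace ℝ (Fin n)}
    {ν : Measure (ℕ → Fin N)} (hjr : JointRec φ ν) (hφ : Measurable φ) {D : Set (ℕ → Fin N)}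
    (hD : MeasurableSet D) (K : ℕ) : ν ((recurrentSet φ (∫ x, φ x ∂ν))^[K] D) = ν D := by
  induction K with
  | zero => rfl
  | succ K ih =>
    rw [Function.iterate_succ_apply', ← ih]
    exact hjr _ (measurableSet_iterate_recurrentSet hφ _ hD K)

/-- On the lattice `q⁻¹ ℤⁿ` an approximate return with error below `q⁻¹` is exact; the `K`
returns encoded by `Ξ^K(D)` then concatenate. -/
lemma exists_birkhoff_eq_smul_of_mem_iterate_recurrentSet
    {φ : (ℕ → Fin N) → EuclideanSpace ℝ (Fin n)} {v : EuclideanSpace ℝ (Fin n)} {q : ℕ}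
    (hq : 0 < q) (hφ : ∀ x, φ x ∈ denomLattice n q) (hv : v ∈ denomLattice n q)
    {D : Set (ℕ → Fin N)} (K : ℕ) {z : ℕ → Fin N} (hz : z ∈ (recurrentSet φ v)^[K] D) :
    ∃ Λ, K ≤ Λ ∧ Shift^[Λ] z ∈ D ∧ birkhoff Λ φ z = (Λ : ℝ) • v := by
  induction K generalizing z with
  | zero => exact ⟨0, le_rfl, hz, by simp [birkhoff]⟩
  | succ K ih =>
    rw [Function.iterate_succ_apply'] at hz
    obtain ⟨L, hL, hLD, hLv⟩ := hz.2 _ (inv_pos.2 (Nat.cast_pos.2 hq))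
    have hmem : birkhoff L φ z - (L : ℝ) • v ∈ denomLattice n q :=
      sub_mem (AddSubgroup.sum_mem _ fun j _ => hφ _)
        (by rw [Nat.cast_smul_eq_nsmul]; exact nsmul_mem hv L)
    have hexact := sub_eq_zero.1 (eq_zero_of_mem_denomLattice hq hmem hLv)
    obtain ⟨Λ, hKΛ, hΛD, hΛv⟩ := ih hLD
    refine ⟨L + Λ, by omega, by rwa [add_comm, Function.iterate_add_apply], ?_⟩
    rw [birkhoff_add, hexact, hΛv, Nat.cast_add, add_smul]

theorem JointRec.exists_return {ν : Measure (ℕ → Fin N)} [NeZero ν]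
    {φ : (ℕ → Fin N) → EuclideanSpace ℝ (Fin n)} (hφm : Measurable φ) (hjr : JointRec φ ν)
    {q : ℕ} (hq : 0 < q) (hφq : ∀ x, φ x ∈ denomLattice n q)
    (hνq : ∫ x, φ x ∂ν ∈ denomLattice n q) {P : ℕ → (ℕ → Fin N) → Prop}
    (hPm : ∀ k, MeasurableSet {x | P k x}) (hP : ∀ᵐ x ∂ν, ∀ᶠ k in atTop, P k x) (m : ℕ) :
    ∃ z Λ, 0 < Λ ∧ (∀ i < m, z (Λ + i) = z i) ∧
      birkhoff Λ φ z = (Λ : ℝ) • ∫ x, φ x ∂ν ∧ P Λ z := by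
  set G : ℕ → Set (ℕ → Fin N) := fun K => {x | ∀ k, K ≤ k → P k x}
  set cyl : (Fin m → Fin N) → Set (ℕ → Fin N) := fun c => {x | ∀ i : Fin m, x i = c i}
  have hDm : ∀ K c, MeasurableSet (G K ∩ cyl c) := fun K c => by measurability
  obtain ⟨K, c, hKc⟩ : ∃ K c, ν (G K ∩ cyl c) ≠ 0 := by
    by_contra! h
    have hnot : ∀ᵐ x ∂ν, ∀ K c, x ∉ G K ∩ cyl c :=
      ae_all_iff.2 fun K => ae_all_iff.2 fun c => measure_eq_zero_iff_ae_notMem.1 (h K c)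
    obtain ⟨x, hx, hxG⟩ := (hP.and hnot).exists
    obtain ⟨K, hK⟩ := eventually_atTop.1 hx
    exact hxG K (fun i => x i) ⟨hK, fun i => rfl⟩
  obtain ⟨z, hz⟩ := nonempty_of_measure_ne_zero
    ((hjr.measure_iterate_recurrentSet hφm (hDm K c) (K + 1)).trans_ne hKc)
  obtain ⟨Λ, hKΛ, hΛD, hΛ⟩ :=
    exists_birkhoff_eq_smul_of_mem_iterate_recurrentSet hq hφq hνq (K + 1) hz
  have hzD := iterate_recurrentSet_subset _ _ _ _ hz
  refine ⟨z, Λ, by omega, fun i hi => ?_, hΛ, hzD.1 Λ (by omega)⟩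
  rw [add_comm, ← shift_iterate_apply z Λ i, hΛD.2 ⟨i, hi⟩, hzD.2 ⟨i, hi⟩]

end Closing

section PeriodicOrbit

variable {N : ℕ}

def periodize {β : Type*} (z : ℕ → β) (Λ : ℕ) : ℕ → β := fun i => z (i % Λ)

lemma shift_iterate_periodize (z : ℕ → Fin N) (Λ : ℕ) :
    Shift^[Λ] (periodize z Λ) = periodize z Λ := by
  funext i
  simp [shift_iterate_apply, periodize]

lemma periodize_apply_of_lt {β : Type*} {z : ℕ → β} {Λ m : ℕ}
    (hz : ∀ i < m, z (Λ + i) = z i) {s : ℕ} (hs : s < Λ + m) : periodize z Λ s = z s := by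
  induction s using Nat.strong_induction_on with
  | _ s ih =>
    rcases lt_or_ge s Λ with hsΛ | hsΛ
    · exact congrArg z (Nat.mod_eq_of_lt hsΛ)
    obtain ⟨t, rfl⟩ := Nat.exists_eq_add_of_le hsΛ
    rcases Λ.eq_zero_or_pos with rfl | hΛ
    · simp [periodize]
    rw [periodize, Nat.add_mod_left, hz t (by omega)]
    exact ih t (by omega) (by omega)

lemma IsSubshiftFT.periodize_mem {S : Set (ℕ → Fin N)} (hS : IsSubshiftFT S) {z : ℕ → Fin N}
    (hz : z ∈ S) {Λ : ℕ} (hΛ : 0 < Λ) (hzΛ : z Λ = z 0) : periodize z Λ ∈ S := by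
  obtain ⟨M, rfl⟩ := hS
  intro i
  have hnext : periodize z Λ (i % Λ + 1) = z (i % Λ + 1) :=
    periodize_apply_of_lt (m := 1) (by simpa using hzΛ) (by have := i.mod_lt hΛ; omega)
  simp only [periodize, Nat.mod_add_mod] at hnext
  simpa only [periodize, hnext] using hz (i % Λ)

lemma Finset.sum_range_succ_eq_of_eq {M : Type*} [AddCommMonoid M] {f : ℕ → M} {Λ : ℕ}
    (h : f Λ = f 0) : ∑ j ∈ Finset.range Λ, f (j + 1) = ∑ j ∈ Finset.range Λ, f j := by
  cases Λ with
  | zero => simp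
  | succ Λ => rw [Finset.sum_range_succ, h, Finset.sum_range_succ']

noncomputable def orbitMeasure (w : ℕ → Fin N) (Λ : ℕ) : Measure (ℕ → Fin N) :=
  (Λ : ENNReal)⁻¹ • ∑ j ∈ Finset.range Λ, Measure.dirac (Shift^[j] w)

lemma orbitMeasure_apply_of_forall_mem {w : ℕ → Fin N} {Λ : ℕ} (hΛ : 0 < Λ)
    {s : Set (ℕ → Fin N)} (hs : ∀ j, Shift^[j] w ∈ s) : orbitMeasure w Λ s = 1 := by
  simp only [orbitMeasure, Measure.smul_apply, Measure.coe_finsetSum, Finset.sum_apply,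
    Measure.dirac_apply_of_mem (hs _), Finset.sum_const, Finset.card_range, nsmul_eq_mul, mul_one,
    smul_eq_mul]
  exact ENNReal.inv_mul_cancel (by exact_mod_cast hΛ.ne') (ENNReal.natCast_ne_top Λ)

lemma isProbabilityMeasure_orbitMeasure (w : ℕ → Fin N) {Λ : ℕ} (hΛ : 0 < Λ) :
    IsProbabilityMeasure (orbitMeasure w Λ) :=
  ⟨orbitMeasure_apply_of_forall_mem hΛ fun _ => mem_univ _⟩

lemma map_shift_orbitMeasure {w : ℕ → Fin N} {Λ : ℕ} (hw : Shift^[Λ] w = w) :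
    (orbitMeasure w Λ).map Shift = orbitMeasure w Λ := by
  rw [orbitMeasure, Measure.map_smul, ← Measure.mapₗ_apply_of_measurable measurable_shift, map_sum]
  simp only [Measure.mapₗ_apply_of_measurable measurable_shift, Measure.map_dirac' measurable_shift,
    ← Function.iterate_succ_apply' Shift]
  rw [Finset.sum_range_succ_eq_of_eq (f := fun j => Measure.dirac (Shift^[j] w)) (by simp [hw])]

lemma integral_orbitMeasure {E : Type*} [NormedAddCommGroup E] [NormedSpace ℝ E] [CompleteSpace E]
    (f : (ℕ → Fin N) → E) (w : ℕ → Fin N) (Λ : ℕ) :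
    ∫ x, f x ∂(orbitMeasure w Λ) = (Λ : ℝ)⁻¹ • birkhoff Λ f w := by
  rw [orbitMeasure, integral_smul_measure,
    integral_finsetSum_measure fun j _ => integrable_dirac enorm_lt_top]
  simp only [integral_dirac, ENNReal.toReal_inv, ENNReal.toReal_natCast]
  rfl

lemma exists_periodicMeasure_eq_orbitMeasure {S : Set (ℕ → Fin N)} (hS : IsSubshiftFT S)
    {w : ℕ → Fin N} (hw : w ∈ S) {Λ : ℕ} (hΛ : 0 < Λ) (hper : Shift^[Λ] w = w) :
    ∃ μ : ProbabilityMeasure (ℕ → Fin N), μ ∈ MS S ∧ IsPeriodicMeasure S μ ∧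
      (μ : Measure (ℕ → Fin N)) = orbitMeasure w Λ :=
  have := isProbabilityMeasure_orbitMeasure w hΛ
  ⟨⟨orbitMeasure w Λ, this⟩,
    ⟨map_shift_orbitMeasure hper, orbitMeasure_apply_of_forall_mem hΛ (hS.iterate_mem hw)⟩,
    ⟨w, hw, Λ, hΛ, hper, rfl⟩, rfl⟩

end PeriodicOrbit

section Main

variable {N : ℕ}

lemma LocallyConstantFn.finite_range {E : Type*} {f : (ℕ → Fin N) → E}
    (hf : LocallyConstantFn f) : (range f).Finite := by
  obtain ⟨j, hj⟩ := hf
  refine (Set.finite_range fun c : Fin (j + 1) → Fin N => f fun i => c ⟨min i j, by omega⟩).subset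
    ?_
  rintro _ ⟨x, rfl⟩
  exact ⟨fun i => x i, hj _ _ fun i hi => by simp [min_eq_left hi]⟩

lemma LocallyConstantFn.exists_denomLattice {n : ℕ}
    {φ : (ℕ → Fin N) → EuclideanSpace ℝ (Fin n)} (hφ : LocallyConstantFn φ)
    (hφQ : ∀ x i, ∃ t : ℚ, φ x i = t) {r : EuclideanSpace ℝ (Fin n)}
    (hrQ : ∀ i, ∃ t : ℚ, r i = t) :
    ∃ q, 0 < q ∧ (∀ x, φ x ∈ denomLattice n q) ∧ r ∈ denomLattice n q := by
  obtain ⟨q, hq, hsub⟩ := exists_subset_denomLattice (hφ.finite_range.insert r) (by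
    rintro v (rfl | ⟨x, rfl⟩)
    exacts [hrQ, hφQ x])
  exact ⟨q, hq, fun x => hsub (mem_insert_of_mem r ⟨x, rfl⟩), hsub (mem_insert r _)⟩

lemma LocallyConstantFn.exists_birkhoff_eq {E : Type*} [AddCommMonoid E]
    {f : (ℕ → Fin N) → E} (hf : LocallyConstantFn f) :
    ∃ j, ∀ k, ∀ x y : ℕ → Fin N, (∀ i < k + j, x i = y i) → birkhoff k f x = birkhoff k f y := by
  obtain ⟨j, hj⟩ := hf
  refine ⟨j + 1, fun k x y hxy => Finset.sum_congr rfl fun t ht => hj _ _ fun i hi => ?_⟩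
  simp only [shift_iterate_apply]
  exact hxy _ (by have := Finset.mem_range.1 ht; omega)

lemma abs_sub_inv_mul_lt {a s t δ : ℝ} {Λ : ℕ} (hΛ : 0 < Λ) (hs : |s - Λ * a| ≤ Λ * δ)
    (hst : |s - t| < δ) : |a - (Λ : ℝ)⁻¹ * t| < 2 * δ := by
  have hΛ' : (1 : ℝ) ≤ Λ := Nat.one_le_cast.2 hΛ
  have hδ : 0 < δ := (abs_nonneg _).trans_lt hst
  rw [show a - (Λ : ℝ)⁻¹ * t = (Λ : ℝ)⁻¹ * (Λ * a - t) by field_simp, abs_mul, abs_inv,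
    Nat.abs_cast, inv_mul_lt_iff₀ (by positivity)]
  calc |Λ * a - t| = |(s - t) - (s - Λ * a)| := by ring_nf
    _ ≤ |s - t| + |s - Λ * a| := abs_sub _ _
    _ < δ + Λ * δ := by linarith
    _ ≤ Λ * (2 * δ) := by nlinarith

end Main

/-- on a subshift of finite type, if `φ` is a locally constant constraint with
rational values, `A` a Walters potential, `r ∈ φ_*(M_σ) ∩ ℚ^n`, and `ν` an ergodic invariant
measure of the subshift with `φ_*(ν) = r` with respect to which `φ` is joint recurrent, then
for every `ε > 0` there is a periodic probability measure `μ` with `φ_*(μ) = r` and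
`|∫A dν - ∫A dμ| < ε`. -/
theorem stmt13 {N n : ℕ} (S : Set (ℕ → Fin N)) (hS : IsSubshiftFT S)
    (lam : ℝ) (hlam0 : 0 < lam) (hlam1 : lam < 1)
    (φ : (ℕ → Fin N) → EuclideanSpace ℝ (Fin n)) (hφm : Measurable φ)
    (hφlc : LocallyConstantFn φ) (hφQ : ∀ x i, ∃ q : ℚ, φ x i = (q : ℝ))
    (A : (ℕ → Fin N) → ℝ) (hAm : Measurable A) (hA : IsWalters S lam A)
    (r : EuclideanSpace ℝ (Fin n)) (hrQ : ∀ i, ∃ q : ℚ, r i = (q : ℝ))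
    (ν : ProbabilityMeasure (ℕ → Fin N)) (hν : ν ∈ MS S)
    (hνerg : Ergodic Shift (ν : Measure (ℕ → Fin N)))
    (hνr : ∫ x, φ x ∂(ν : Measure (ℕ → Fin N)) = r)
    (hjr : JointRec φ (ν : Measure (ℕ → Fin N)))
    (ε : ℝ) (hε : 0 < ε) :
    ∃ μ : ProbabilityMeasure (ℕ → Fin N), μ ∈ MS S ∧ IsPeriodicMeasure S μ ∧
      ∫ x, φ x ∂(μ : Measure (ℕ → Fin N)) = r ∧
      |∫ x, A x ∂(ν : Measure (ℕ → Fin N)) - ∫ x, A x ∂(μ : Measure (ℕ → Fin N))| < ε := by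
  have hνS : ∀ᵐ x ∂(ν : Measure (ℕ → Fin N)), x ∈ S :=
    mem_ae_iff.2 ((prob_compl_eq_zero_iff hS.measurableSet).2 hν.2)
  obtain ⟨q, hq, hφq, hrq⟩ := hφlc.exists_denomLattice hφQ hrQ
  have hAi := hA.integrable hlam0 hlam1 hAm hνS
  obtain ⟨m, hm⟩ := hA.exists_abs_birkhoff_sub_lt hlam0 hlam1 (half_pos hε)
  obtain ⟨j, hj⟩ := hφlc.exists_birkhoff_eq
  -- cylinders of length `max m j + 1` serve the Walters bound, the locality of `φ` and the seam
  obtain ⟨z, Λ, hΛ, hzΛ, hφz, hzS, hAz⟩ := hjr.exists_return hφm hq hφq (hνr ▸ hrq)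
    (P := fun k x => x ∈ S ∧ |birkhoff k A x - k * ∫ y, A y ∂(ν : Measure _)| ≤ k * (ε / 2))
    (fun k => hS.measurableSet.inter
      (measurableSet_le ((measurable_birkhoff hAm k).sub measurable_const).abs measurable_const))
    (by filter_upwards [hνS, ae_eventually_abs_birkhoffSum_sub_le hνerg hAm hAi (half_pos hε)]
          with x hx hk using hk.mono fun k hk => ⟨hx, hk⟩)
    (max m j + 1)
  have hwz : ∀ i < Λ + (max m j + 1), periodize z Λ i = z i := fun i hi =>
    periodize_apply_of_lt hzΛ hi
  have hwS := hS.periodize_mem hzS hΛ (by simpa using hzΛ 0 (by omega))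
  obtain ⟨μ, hμS, hμper, hμ⟩ :=
    exists_periodicMeasure_eq_orbitMeasure hS hwS hΛ (shift_iterate_periodize z Λ)
  refine ⟨μ, hμS, hμper, ?_, ?_⟩
  · rw [hμ, integral_orbitMeasure, hj Λ _ z fun i hi => hwz i (by omega), hφz, hνr, smul_smul,
      inv_mul_cancel₀ (by positivity), one_smul]
  · rw [hμ, integral_orbitMeasure, smul_eq_mul, ← mul_div_cancel₀ ε two_ne_zero]
    exact abs_sub_inv_mul_lt hΛ hAz (hm Λ z hzS _ hwS fun i hi => (hwz i (by omega)).symm)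
end
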